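/- arXiv:2004.09611 — 2 statements merged into one kernel-verified Lean document; each statement's English description precedes it below -/
import Mathlib

section
/- Let G be a finite group and z ∈ G a central element with z² = e. The map λ : D(G) → D(G) determined by g ↦ g and δ_g ↦ δ_g⁰ + δ_{gz}¹, where δ_g^σ = e^σ·δ_g with e⁰ = (1+z)/2 and e¹ = (1−z)/2, is an algebra isomorphism. -/
/-!
STATEMENT 6: Let `G` be a finite group and `z ∈ G` central with `z² = e`.
The map `λ : D(G) → D(G)` determined by `g ↦ g` and
`δ_g ↦ δ_g⁰ + δ_{gz}¹`, where `δ_g^σ = e^σ·δ_g`, `e⁰ = (1+z)/2`,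
`e¹ = (1−z)/2`, is an algebra isomorphism.

`D(G)` is modeled on the basis `{g ⊗ δ_h}` indexed by `G × G`.  On this basis,
`λ(g·δ_h) = ½((g,h) + (gz,h) + (g,hz) − (gz,hz))`.
-/

open Finsupp

/-- Multiplication of the Drinfeld double `D(G)`. -/
noncomputable def dmul (k G : Type) [Field k] [Group G] [DecidableEq G]
    (a b : (G × G) →₀ k) : (G × G) →₀ k :=
  a.sum fun p c => b.sum fun q d =>
    if q.1⁻¹ * p.2 * q.1 = q.2 then Finsupp.single (p.1 * q.1, q.2) (c * d) else 0

/-- The group-like generator `g = g ⊗ Σ_h δ_h` of `D(G)`. -/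
noncomputable def grpElem (k G : Type) [Field k] [Group G] [Fintype G] [DecidableEq G]
    (g : G) : (G × G) →₀ k :=
  ∑ h : G, Finsupp.single (g, h) (1 : k)

/-- The generator `δ_h = e ⊗ δ_h` of `D(G)`. -/
noncomputable def delElem (k G : Type) [Field k] [Group G] [DecidableEq G]
    (h : G) : (G × G) →₀ k :=
  Finsupp.single ((1 : G), h) (1 : k)

/-- The map `λ`, given on the basis by
`λ(g·δ_h) = ½((g,h) + (gz,h) + (g,hz) − (gz,hz))`, the linear extension of
`λ(g) = g`, `λ(δ_h) = δ_h⁰ + δ_{hz}¹`. -/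
noncomputable def lamMap (k G : Type) [Field k] [Group G] [DecidableEq G]
    (z : G) (a : (G × G) →₀ k) : (G × G) →₀ k :=
  a.sum fun p c => ((2 : k)⁻¹ * c) •
    (Finsupp.single (p.1, p.2) (1 : k) + Finsupp.single (p.1 * z, p.2) (1 : k)
      + Finsupp.single (p.1, p.2 * z) (1 : k) - Finsupp.single (p.1 * z, p.2 * z) (1 : k))

/-!
Write `R` for multiplication by the central element `z` (on the basis, `(g, h) ↦ (gz, h)`) and
`S` for the automorphism `g ↦ g`, `δ_h ↦ δ_{hz}` of `D(G)`. Then `e⁰ = (1 + R)/2` and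
`e¹ = (1 - R)/2` are orthogonal central idempotents with `e⁰ + e¹ = 1`, and `λ = e⁰ + e¹ S`.
Since `S` is multiplicative and commutes with `R`,
`λ(x) λ(y) = e⁰ xy + e¹ S(x) S(y) = λ(xy)` and `λ² = e⁰ + e¹ S² = 1`.
-/

namespace Module.End

variable {k M : Type*}

section CommSemiring

variable [CommSemiring k] [AddCommMonoid M] [Module k M]

def IsCentralFor (μ : M →ₗ[k] M →ₗ[k] M) (P : Module.End k M) : Prop :=
  ∀ x y, μ (P x) y = P (μ x y) ∧ μ x (P y) = P (μ x y)

theorem add_mul_map_mul {μ : M →ₗ[k] M →ₗ[k] M} {P₀ P₁ S : Module.End k M}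
    (h₀ : IsCentralFor μ P₀) (h₁ : IsCentralFor μ P₁)
    (h₀₀ : P₀ * P₀ = P₀) (h₁₁ : P₁ * P₁ = P₁)
    (h₀₁ : P₀ * P₁ = 0) (h₁₀ : P₁ * P₀ = 0) (hS : ∀ x y, μ (S x) (S y) = S (μ x y)) (x y : M) :
    μ ((P₀ + P₁ * S) x) ((P₀ + P₁ * S) y) = (P₀ + P₁ * S) (μ x y) := by
  have hPQ {P Q : Module.End k M} (hP : IsCentralFor μ P) (hQ : IsCentralFor μ Q) (u v : M) :
      μ (P u) (Q v) = (P * Q) (μ u v) := by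
    rw [(hP _ _).1, (hQ _ _).2, Module.End.mul_apply]
  simp only [LinearMap.add_apply, mul_apply, map_add, hPQ h₀ h₀, hPQ h₀ h₁, hPQ h₁ h₀,
    hPQ h₁ h₁, h₀₀, h₁₁, h₀₁, h₁₀, hS, LinearMap.zero_apply, add_zero, zero_add]

theorem add_mul_mul_self_eq_one {P₀ P₁ S : Module.End k M}
    (h₀₀ : P₀ * P₀ = P₀) (h₁₁ : P₁ * P₁ = P₁) (h₀₁ : P₀ * P₁ = 0) (h₁₀ : P₁ * P₀ = 0)
    (h_add : P₀ + P₁ = 1) (hS₀ : Commute S P₀) (hS₁ : Commute S P₁) (hSS : S * S = 1) :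
    (P₀ + P₁ * S) * (P₀ + P₁ * S) = 1 := by
  calc (P₀ + P₁ * S) * (P₀ + P₁ * S)
      = P₀ * P₀ + P₀ * P₁ * S + P₁ * P₀ * S + P₁ * P₁ * (S * S) := by
        rw [mul_add, add_mul, add_mul, mul_assoc P₁ S P₀, hS₀.eq, mul_assoc P₁ S,
          ← mul_assoc S P₁, hS₁.eq]
        noncomm_ring
    _ = 1 := by simp only [h₀₀, h₁₁, h₀₁, h₁₀, hSS, zero_mul, add_zero, mul_one, h_add]

end CommSemiring

section Field

variable [Field k] [AddCommGroup M] [Module k M]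

def evenPart (R : Module.End k M) : Module.End k M := (2 : k)⁻¹ • (1 + R)

def oddPart (R : Module.End k M) : Module.End k M := (2 : k)⁻¹ • (1 - R)

variable {R : Module.End k M}

theorem evenPart_add_oddPart (h2 : (2 : k) ≠ 0) : evenPart R + oddPart R = 1 := by
  rw [evenPart, oddPart, ← smul_add, add_add_sub_cancel, ← two_smul k, smul_smul,
    inv_mul_cancel₀ h2, one_smul]

theorem evenPart_mul_self (h2 : (2 : k) ≠ 0) (hR : R * R = 1) :
    evenPart R * evenPart R = evenPart R := by
  rw [evenPart, smul_mul_smul_comm, add_mul, mul_add, mul_add, hR, one_mul, mul_one]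
  match_scalars <;> field_simp <;> ring

theorem oddPart_mul_self (h2 : (2 : k) ≠ 0) (hR : R * R = 1) :
    oddPart R * oddPart R = oddPart R := by
  rw [oddPart, smul_mul_smul_comm, sub_mul, mul_sub, mul_sub, hR, one_mul, mul_one]
  match_scalars <;> field_simp <;> ring

theorem evenPart_mul_oddPart (hR : R * R = 1) : evenPart R * oddPart R = 0 := by
  rw [evenPart, oddPart, smul_mul_smul_comm, add_mul, mul_sub, mul_sub, hR, one_mul, mul_one]
  module

theorem oddPart_mul_evenPart (hR : R * R = 1) : oddPart R * evenPart R = 0 := by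
  rw [evenPart, oddPart, smul_mul_smul_comm, sub_mul, mul_add, mul_add, hR, one_mul, mul_one]
  module

theorem IsCentralFor.evenPart {μ : M →ₗ[k] M →ₗ[k] M} (hR : IsCentralFor μ R) :
    IsCentralFor μ (evenPart R) := fun x y => by
  simp only [Module.End.evenPart, LinearMap.smul_apply, LinearMap.add_apply, one_apply, map_smul,
    map_add, (hR x y).1, (hR x y).2, and_self]

theorem IsCentralFor.oddPart {μ : M →ₗ[k] M →ₗ[k] M} (hR : IsCentralFor μ R) :
    IsCentralFor μ (oddPart R) := fun x y => by
  simp only [Module.End.oddPart, LinearMap.smul_apply, LinearMap.sub_apply, one_apply, map_smul,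
    map_sub, (hR x y).1, (hR x y).2, and_self]

theorem commute_evenPart {S : Module.End k M} (h : Commute S R) : Commute S (evenPart R) :=
  ((Commute.one_right S).add_right h).smul_right _

theorem commute_oddPart {S : Module.End k M} (h : Commute S R) : Commute S (oddPart R) :=
  ((Commute.one_right S).sub_right h).smul_right _

end Field

end Module.End

section CentralElement

variable {G : Type*} [Group G] {z : G}

theorem mul_right_comm_of_central (hzc : ∀ a : G, z * a = a * z) (a b : G) :
    a * z * b = a * b * z := by
  rw [mul_assoc, hzc, ← mul_assoc]

theorem conj_mul_of_central (hzc : ∀ a : G, z * a = a * z) (a x : G) :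
    (a * z)⁻¹ * x * (a * z) = a⁻¹ * x * a := by
  calc (a * z)⁻¹ * x * (a * z) = z⁻¹ * (a⁻¹ * x * a * z) := by group
    _ = a⁻¹ * x * a := by rw [← hzc, inv_mul_cancel_left]

theorem inv_mul_mul_of_central (hzc : ∀ a : G, z * a = a * z) (a x : G) :
    a⁻¹ * (x * z) * a = a⁻¹ * x * a * z := by
  rw [← mul_assoc, mul_right_comm_of_central hzc]

end CentralElement

section DrinfeldDouble

open Module.End

variable {k G : Type} [Field k] [Group G]

variable (k) in
noncomputable def grpShift (z : G) : Module.End k ((G × G) →₀ k) :=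
  lmapDomain k k fun p => (p.1 * z, p.2)

variable (k) in
noncomputable def delShift (z : G) : Module.End k ((G × G) →₀ k) :=
  lmapDomain k k fun p => (p.1, p.2 * z)

variable {z : G}

theorem grpShift_single (p : G × G) (c : k) :
    grpShift k z (single p c) = single (p.1 * z, p.2) c := by
  simp [grpShift]

theorem delShift_single (p : G × G) (c : k) :
    delShift k z (single p c) = single (p.1, p.2 * z) c := by
  simp [delShift]

theorem grpShift_mul_self (hz2 : z * z = 1) : grpShift k z * grpShift k z = 1 :=
  lhom_ext fun p c => by simp [grpShift_single, mul_assoc, hz2]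

theorem delShift_mul_self (hz2 : z * z = 1) : delShift k z * delShift k z = 1 :=
  lhom_ext fun p c => by simp [delShift_single, mul_assoc, hz2]

theorem commute_delShift_grpShift : Commute (delShift k z) (grpShift k z) :=
  lhom_ext fun p c => by simp [grpShift_single, delShift_single]

variable (k) in
noncomputable def lamOp (z : G) : Module.End k ((G × G) →₀ k) :=
  evenPart (grpShift k z) + oddPart (grpShift k z) * delShift k z

theorem lamOp_involutive (h2 : (2 : k) ≠ 0) (hz2 : z * z = 1) :
    Function.Involutive (lamOp k z) := fun x => by
  have hR := grpShift_mul_self (k := k) hz2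
  have hSR := commute_delShift_grpShift (k := k) (z := z)
  rw [← Module.End.mul_apply, lamOp, add_mul_mul_self_eq_one (evenPart_mul_self h2 hR)
    (oddPart_mul_self h2 hR) (evenPart_mul_oddPart hR) (oddPart_mul_evenPart hR)
    (evenPart_add_oddPart h2) (commute_evenPart hSR) (commute_oddPart hSR)
    (delShift_mul_self hz2), one_apply]

variable [DecidableEq G]

theorem dmul_single_single (p q : G × G) (c d : k) :
    dmul k G (single p c) (single q d)
      = if q.1⁻¹ * p.2 * q.1 = q.2 then single (p.1 * q.1, q.2) (c * d) else 0 := by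
  unfold dmul
  rw [sum_single_index (by simp), sum_single_index (by split_ifs <;> simp)]

theorem dmul_add_left (a a' b : (G × G) →₀ k) :
    dmul k G (a + a') b = dmul k G a b + dmul k G a' b :=
  sum_add_index' (by simp) fun p c₁ c₂ => by
    rw [← sum_add]
    exact sum_congr fun q _ => by split_ifs <;> simp [add_mul, single_add]

theorem dmul_add_right (a b b' : (G × G) →₀ k) :
    dmul k G a (b + b') = dmul k G a b + dmul k G a b' := by
  unfold dmul
  rw [← sum_add]
  exact sum_congr fun p _ =>
    sum_add_index' (by simp) fun q d₁ d₂ => by split_ifs <;> simp [mul_add, single_add]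

theorem dmul_smul_left (r : k) (a b : (G × G) →₀ k) :
    dmul k G (r • a) b = r • dmul k G a b := by
  unfold dmul
  rw [sum_smul_index (by simp), smul_sum]
  exact sum_congr fun p _ => by
    rw [smul_sum]
    exact sum_congr fun q _ => by split_ifs <;>
      simp only [smul_single, smul_eq_mul, mul_assoc, smul_zero]

theorem dmul_smul_right (r : k) (a b : (G × G) →₀ k) :
    dmul k G a (r • b) = r • dmul k G a b := by
  unfold dmul
  rw [smul_sum]
  exact sum_congr fun p _ => by
    rw [sum_smul_index (by simp), smul_sum]
    exact sum_congr fun q _ => by split_ifs <;>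
      simp only [smul_single, smul_eq_mul, mul_left_comm, smul_zero]

variable (k G) in
noncomputable def dmulBilin : ((G × G) →₀ k) →ₗ[k] ((G × G) →₀ k) →ₗ[k] ((G × G) →₀ k) :=
  LinearMap.mk₂ k (dmul k G) dmul_add_left dmul_smul_left dmul_add_right dmul_smul_right

theorem dmulBilin_apply (a b : (G × G) →₀ k) : dmulBilin k G a b = dmul k G a b := rfl

theorem isCentralFor_grpShift (hzc : ∀ a : G, z * a = a * z) :
    IsCentralFor (dmulBilin k G) (grpShift k z) := by
  have hl : (dmulBilin k G).comp (grpShift k z) = (dmulBilin k G).compr₂ (grpShift k z) :=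
    lhom_ext fun p c => lhom_ext fun q d => by
      simp only [LinearMap.comp_apply, LinearMap.compr₂_apply, dmulBilin_apply, grpShift_single,
        dmul_single_single]
      split_ifs <;> simp only [map_zero, grpShift_single, mul_right_comm_of_central hzc]
  have hr : (dmulBilin k G).compl₂ (grpShift k z) = (dmulBilin k G).compr₂ (grpShift k z) :=
    lhom_ext fun p c => lhom_ext fun q d => by
      simp only [LinearMap.compl₂_apply, LinearMap.compr₂_apply, dmulBilin_apply,
        grpShift_single, dmul_single_single, conj_mul_of_central hzc]
      split_ifs <;> simp only [map_zero, grpShift_single, mul_assoc]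
  exact fun x y => ⟨LinearMap.congr_fun₂ hl x y, LinearMap.congr_fun₂ hr x y⟩

theorem delShift_dmul (hzc : ∀ a : G, z * a = a * z) (x y : (G × G) →₀ k) :
    dmul k G (delShift k z x) (delShift k z y) = delShift k z (dmul k G x y) := by
  have h : ((dmulBilin k G).comp (delShift k z)).compl₂ (delShift k z)
      = (dmulBilin k G).compr₂ (delShift k z) :=
    lhom_ext fun p c => lhom_ext fun q d => by
      simp only [LinearMap.compl₂_apply, LinearMap.comp_apply, LinearMap.compr₂_apply,
        dmulBilin_apply, delShift_single, dmul_single_single, inv_mul_mul_of_central hzc,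
        mul_left_inj]
      split_ifs <;> simp only [map_zero, delShift_single]
  exact LinearMap.congr_fun₂ h x y

theorem delShift_grpElem [Fintype G] (g : G) :
    delShift k z (grpElem k G g) = grpElem k G g := by
  simp only [grpElem, map_sum, delShift_single]
  exact Fintype.sum_equiv (Equiv.mulRight z) _ _ fun h => rfl

theorem lamMap_eq_lamOp : lamMap k G z = lamOp k z := funext fun a => by
  conv_rhs => rw [← sum_single a]
  rw [map_finsuppSum]
  refine sum_congr fun p _ => ?_
  simp only [lamOp, LinearMap.add_apply, Module.End.mul_apply, evenPart, oddPart,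
    LinearMap.smul_apply, LinearMap.sub_apply, one_apply, grpShift_single, delShift_single,
    mul_smul, smul_add, smul_sub, smul_single_one]
  module

theorem lamOp_dmul (h2 : (2 : k) ≠ 0) (hzc : ∀ a : G, z * a = a * z) (hz2 : z * z = 1)
    (x y : (G × G) →₀ k) : lamOp k z (dmul k G x y) = dmul k G (lamOp k z x) (lamOp k z y) := by
  have hR := grpShift_mul_self (k := k) hz2
  have hcen := isCentralFor_grpShift (k := k) hzc
  exact (add_mul_map_mul hcen.evenPart hcen.oddPart (evenPart_mul_self h2 hR)
    (oddPart_mul_self h2 hR) (evenPart_mul_oddPart hR) (oddPart_mul_evenPart hR)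
    (delShift_dmul hzc) x y).symm

theorem lamOp_grpElem [Fintype G] (h2 : (2 : k) ≠ 0) (g : G) :
    lamOp k z (grpElem k G g) = grpElem k G g := by
  rw [lamOp, LinearMap.add_apply, Module.End.mul_apply, delShift_grpElem, ← LinearMap.add_apply,
    evenPart_add_oddPart h2, one_apply]

theorem lamOp_delElem (h : G) :
    lamOp k z (delElem k G h)
      = (2 : k)⁻¹ • (single (1, h) 1 + single (z, h) 1)
        + (2 : k)⁻¹ • (single (1, h * z) 1 - single (z, h * z) 1) := by
  simp only [lamOp, delElem, LinearMap.add_apply, Module.End.mul_apply, evenPart, oddPart,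
    LinearMap.smul_apply, LinearMap.sub_apply, one_apply, grpShift_single, delShift_single,
    one_mul]

end DrinfeldDouble

/-- `λ : D(G) → D(G)` is an algebra isomorphism: it is `k`-linear,
multiplicative and bijective, it fixes the group-like generators `g`, and
sends `δ_h` to `δ_h⁰ + δ_{hz}¹ = ½(δ_h + z·δ_h) + ½(δ_{hz} − z·δ_{hz})`. -/
theorem lam_isAlgebraIso (k G : Type) [Field k] [CharZero k] [Group G] [Fintype G]
    [DecidableEq G] (z : G) (hzc : ∀ a : G, z * a = a * z) (hz2 : z * z = 1) :
    (∀ a b : (G × G) →₀ k, lamMap k G z (a + b) = lamMap k G z a + lamMap k G z b) ∧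
    (∀ (r : k) (a : (G × G) →₀ k), lamMap k G z (r • a) = r • lamMap k G z a) ∧
    (∀ a b : (G × G) →₀ k,
      lamMap k G z (dmul k G a b) = dmul k G (lamMap k G z a) (lamMap k G z b)) ∧
    Function.Bijective (lamMap k G z) ∧
    (∀ g : G, lamMap k G z (grpElem k G g) = grpElem k G g) ∧
    (∀ h : G, lamMap k G z (delElem k G h)
      = (2 : k)⁻¹ • (Finsupp.single ((1 : G), h) (1 : k)
          + Finsupp.single (z, h) (1 : k))
        + (2 : k)⁻¹ • (Finsupp.single ((1 : G), h * z) (1 : k)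
          - Finsupp.single (z, h * z) (1 : k))) := by
  have h2 : (2 : k) ≠ 0 := two_ne_zero
  rw [lamMap_eq_lamOp]
  exact ⟨map_add _, map_smul _, lamOp_dmul h2 hzc hz2, (lamOp_involutive h2 hz2).bijective,
    lamOp_grpElem h2, lamOp_delElem⟩
end

section
/- Under the equivalence between G-equivariant bundles supported on the conjugacy class of g and Rep(Z(g)), the fiberwise tensor product (V ⊗̄ W)_h = V_h ⊗ W_h corresponds to the ordinary tensor product of Z(g)-representations. -/
/-!
STATEMENT 19: Under the equivalence between `G`-equivariant bundles supported
on the conjugacy class of `g` and `Rep(Z(g))` (given by restriction to the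
fiber at `g`), the fiberwise tensor product `(V ⊗̄ W)_h = V_h ⊗ W_h`
corresponds to the ordinary tensor product of `Z(g)`-representations.

Bundles are modeled with fiber projections; the fiber of `V ⊗̄ W` at `g` is
`range (π^V_g ⊗ π^W_g) ⊆ V.M ⊗ W.M`, with the diagonal `G`-action.  The
theorem produces a linear isomorphism
`(V ⊗̄ W)_g ≃ V_g ⊗ W_g` intertwining the diagonal `Z(g)`-actions.
-/

open TensorProduct

/-- A `G`-equivariant vector bundle over `G`. -/
structure GEqBundle (k G : Type) [Field k] [Group G] [Fintype G] where
  M : Type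
  [acg : AddCommGroup M]
  [mod : Module k M]
  ρ : G → (M →ₗ[k] M)
  ρ_one : ρ 1 = LinearMap.id
  ρ_mul : ∀ g h : G, ρ (g * h) = ρ g ∘ₗ ρ h
  π : G → (M →ₗ[k] M)
  π_idem : ∀ g, π g ∘ₗ π g = π g
  π_orth : ∀ g h, g ≠ h → π g ∘ₗ π h = 0
  π_total : ∑ g : G, π g = LinearMap.id
  compat : ∀ h g, ρ h ∘ₗ π g = π (h * g * h⁻¹) ∘ₗ ρ h

attribute [instance] GEqBundle.acg GEqBundle.mod

/-- The fiber at `g` of the fiberwise tensor product `V ⊗̄ W` is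
`Z(g)`-equivariantly isomorphic to the ordinary tensor product
`V_g ⊗ W_g` of the fibers with the diagonal `Z(g)`-action. -/
theorem fiberwiseTensor_fiber_is_tensor_of_fibers (k G : Type) [Field k]
    [Group G] [Fintype G] (g : G) (V W : GEqBundle k G) :
    ∃ e : ↥(LinearMap.range (TensorProduct.map (V.π g) (W.π g)))
            ≃ₗ[k] (↥(LinearMap.range (V.π g)) ⊗[k] ↥(LinearMap.range (W.π g))),
      ∀ z : G, z ∈ Subgroup.centralizer ({g} : Set G) →
        ∀ (hV : ∀ x ∈ LinearMap.range (V.π g), V.ρ z x ∈ LinearMap.range (V.π g))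
          (hW : ∀ x ∈ LinearMap.range (W.π g), W.ρ z x ∈ LinearMap.range (W.π g))
          (hQ : ∀ x ∈ LinearMap.range (TensorProduct.map (V.π g) (W.π g)),
            (TensorProduct.map (V.ρ z) (W.ρ z)) x
              ∈ LinearMap.range (TensorProduct.map (V.π g) (W.π g)))
          (x : ↥(LinearMap.range (TensorProduct.map (V.π g) (W.π g)))),
          e ⟨(TensorProduct.map (V.ρ z) (W.ρ z)) x.1, hQ x.1 x.2⟩
            = TensorProduct.map ((V.ρ z).restrict hV) ((W.ρ z).restrict hW) (e x) := by
  classical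
  set P := V.π g with hP
  set Q := W.π g with hQdef
  -- the inclusion map from the tensor of fibers into the big tensor product
  set f : (↥(LinearMap.range P) ⊗[k] ↥(LinearMap.range Q)) →ₗ[k] (V.M ⊗[k] W.M) :=
    TensorProduct.map (LinearMap.range P).subtype (LinearMap.range Q).subtype with hf
  have hfinj : Function.Injective f := by
    rw [hf, ← LinearMap.rTensor_comp_lTensor]
    exact (Module.Flat.rTensor_preserves_injective_linearMap _
        (Submodule.injective_subtype _)).comp
      (Module.Flat.lTensor_preserves_injective_linearMap _
        (Submodule.injective_subtype _))
  have hPidem : ∀ x : V.M, P (P x) = P x := fun x =>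
    congrArg (fun φ : V.M →ₗ[k] V.M => φ x) (V.π_idem g)
  have hQidem : ∀ x : W.M, Q (Q x) = Q x := fun x =>
    congrArg (fun φ : W.M →ₗ[k] W.M => φ x) (W.π_idem g)
  have hfix : ∀ x ∈ LinearMap.range P, P x = x := by
    rintro _ ⟨y, rfl⟩; exact hPidem y
  have hfixQ : ∀ x ∈ LinearMap.range Q, Q x = x := by
    rintro _ ⟨y, rfl⟩; exact hQidem y
  have hrange : LinearMap.range f = LinearMap.range (TensorProduct.map P Q) := by
    apply le_antisymm
    · rintro _ ⟨y, rfl⟩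
      induction y using TensorProduct.induction_on with
      | zero => simp
      | tmul a b =>
        refine ⟨a.1 ⊗ₜ b.1, ?_⟩
        simp [hf, TensorProduct.map_tmul, hfix a.1 a.2, hfixQ b.1 b.2]
      | add a b ha hb =>
        rw [map_add]; exact add_mem ha hb
    · rintro _ ⟨y, rfl⟩
      induction y using TensorProduct.induction_on with
      | zero => simp
      | tmul a b =>
        exact ⟨(⟨P a, ⟨a, rfl⟩⟩ : ↥(LinearMap.range P)) ⊗ₜ
          (⟨Q b, ⟨b, rfl⟩⟩ : ↥(LinearMap.range Q)), rfl⟩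
      | add a b ha hb =>
        rw [map_add]; exact add_mem ha hb
  -- the equivalence
  let e₀ := LinearEquiv.ofInjective f hfinj
  let e : ↥(LinearMap.range (TensorProduct.map P Q))
      ≃ₗ[k] (↥(LinearMap.range P) ⊗[k] ↥(LinearMap.range Q)) :=
    ((e₀.trans (LinearEquiv.ofEq _ _ hrange)).symm)
  refine ⟨e, ?_⟩
  intro z hz hV hW hQ' x
  -- it suffices to check after applying e.symm
  apply e.symm.injective
  rw [e.symm_apply_apply]
  -- key: e.symm t = ⟨f t, _⟩ as elements
  have hesymm : ∀ t, ((e.symm t : ↥(LinearMap.range (TensorProduct.map P Q))) : V.M ⊗[k] W.M)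
      = f t := fun t => rfl
  apply Subtype.ext
  rw [hesymm]
  have hx : (x : V.M ⊗[k] W.M) = f (e x) := by
    rw [← hesymm, e.symm_apply_apply]
  show (TensorProduct.map (V.ρ z) (W.ρ z)) (x : V.M ⊗[k] W.M) = _
  rw [hx]
  generalize e x = t
  induction t using TensorProduct.induction_on with
  | zero => simp
  | tmul a b =>
    simp only [hf, TensorProduct.map_tmul]
    rfl
  | add a b ha hb =>
    simp only [map_add, ha, hb]
end
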